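/- Let V be a finite nonempty type, w : V → V → ℕ∞, q : ℕ with q ≥ 1, and let w_q be the augmented graph on V ⊕ Bool. Then rad_w < 2q if and only if there exists a vertex p : V ⊕ Bool with ecc_{w_q}(p) ≠ diam_{w_q} (i.e., the augmented graph has a vertex that is not an endpoint of a diameter). -/

import Mathlib

/-- Weight of a walk starting at `u` and visiting the vertices of `p` in order. -/
def walkWeight {V : Type*} (w : V → V → ℕ∞) : V → List V → ℕ∞
  | _, [] => 0
  | u, x :: xs => w u x + walkWeight w x xs

/-- Shortest-path distance: infimum of weights of walks from `u` to `v`. -/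
noncomputable def gdist {V : Type*} (w : V → V → ℕ∞) (u v : V) : ℕ∞ :=
  ⨅ (p : List V) (_ : (u :: p).getLast (List.cons_ne_nil u p) = v), walkWeight w u p

/-- Eccentricity of a vertex. -/
noncomputable def ecc {V : Type*} (w : V → V → ℕ∞) (v : V) : ℕ∞ :=
  ⨆ u, gdist w v u

/-- Radius. -/
noncomputable def rad {V : Type*} (w : V → V → ℕ∞) : ℕ∞ :=
  ⨅ v, ecc w v

/-- Diameter. -/
noncomputable def diam {V : Type*} (w : V → V → ℕ∞) : ℕ∞ :=
  ⨆ v, ecc w v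

/-- Augmented graph on `V ⊕ Bool`: two extra vertices `x = inr false`, `y = inr true`
connected to every original vertex (in both directions) by edges of weight `q`. -/
def aug {V : Type*} (w : V → V → ℕ∞) (q : ℕ) : V ⊕ Bool → V ⊕ Bool → ℕ∞
  | Sum.inl u, Sum.inl v => w u v
  | Sum.inl _, Sum.inr _ => (q : ℕ∞)
  | Sum.inr _, Sum.inl _ => (q : ℕ∞)
  | Sum.inr _, Sum.inr _ => ⊤

/-!
Every vertex of the augmented graph is within `2q` of every other one, and the two extra
vertices are exactly `2q` apart, so `diam (aug w q) = 2q`, attained at `x` and `y`. A walk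
between original vertices that passes through an extra vertex costs at least `2q`, so their
augmented distance lies between `min (dist_w, 2q)` and `dist_w`; as the extra vertices are only
`q < 2q` away, `ecc (aug w q) (inl v) < 2q` iff `ecc w v < 2q`. The lower bounds on distances
come from potentials `h` with `h v = 0` and `h a ≤ w a b + h b` on every edge.
-/

namespace ShortestPath

variable {V : Type*} (w : V → V → ℕ∞)

theorem gdist_le_walkWeight {u v : V} (p : List V)
    (hp : (u :: p).getLast (List.cons_ne_nil u p) = v) : gdist w u v ≤ walkWeight w u p :=
  iInf₂_le p hp

theorem gdist_self (v : V) : gdist w v v = 0 :=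
  nonpos_iff_eq_zero.mp (gdist_le_walkWeight w [] rfl)

theorem gdist_le_add_gdist (u m v : V) : gdist w u v ≤ w u m + gdist w m v :=
  calc gdist w u v
      ≤ ⨅ (p : List V) (_ : (m :: p).getLast (List.cons_ne_nil m p) = v),
          w u m + walkWeight w m p :=
        le_iInf₂ fun p hp => gdist_le_walkWeight w (m :: p) (by rwa [List.getLast_cons])
    _ = w u m + gdist w m v := (ENat.add_iInf₂ _).symm

theorem gdist_le_edge (u v : V) : gdist w u v ≤ w u v := by
  simpa [gdist_self] using gdist_le_add_gdist w u v v

theorem gdist_le_edge_add_edge (u m v : V) : gdist w u v ≤ w u m + w m v :=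
  (gdist_le_add_gdist w u m v).trans (add_le_add_right (gdist_le_edge w m v) _)

theorem le_gdist_of_potential {v : V} (h : V → ℕ∞) (hv : h v = 0)
    (hedge : ∀ a b, h a ≤ w a b + h b) (u : V) : h u ≤ gdist w u v := by
  refine le_iInf₂ fun p hp => ?_
  induction p generalizing u with
  | nil => simp_all [walkWeight]
  | cons m p ih =>
    rw [List.getLast_cons (List.cons_ne_nil m p)] at hp
    exact (hedge u m).trans (add_le_add_right (ih m hp) _)

theorem gdist_map_le {W : Type*} (w' : W → W → ℕ∞) (f : V → W)
    (hf : ∀ a b, w' (f a) (f b) ≤ w a b) (u v : V) : gdist w' (f u) (f v) ≤ gdist w u v :=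
  le_gdist_of_potential w (fun a => gdist w' (f a) (f v)) (gdist_self w' _)
    (fun a b => (gdist_le_add_gdist w' _ (f b) _).trans (add_le_add_left (hf a b) _)) u

end ShortestPath

namespace Augmented

open Sum ShortestPath

variable {V : Type*} (w : V → V → ℕ∞) (q : ℕ)

theorem gdist_inl_inl_le (u v : V) : gdist (aug w q) (inl u) (inl v) ≤ gdist w u v :=
  gdist_map_le w (aug w q) inl (fun _ _ => le_rfl) u v

theorem gdist_le_two_mul [Nonempty V] (s t : V ⊕ Bool) :
    gdist (aug w q) s t ≤ ((2 * q : ℕ) : ℕ∞) := by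
  have hq : (q : ℕ∞) ≤ ((2 * q : ℕ) : ℕ∞) := by exact_mod_cast Nat.le_mul_of_pos_left q two_pos
  have two_q : ((2 * q : ℕ) : ℕ∞) = q + q := by push_cast; ring
  obtain ⟨v⟩ := ‹Nonempty V›
  rcases s with u | b <;> rcases t with u' | b'
  · exact two_q ▸ gdist_le_edge_add_edge (aug w q) _ (inr false) _
  · exact (gdist_le_edge (aug w q) _ _).trans hq
  · exact (gdist_le_edge (aug w q) _ _).trans hq
  · exact two_q ▸ gdist_le_edge_add_edge (aug w q) _ (inl v) _

theorem two_mul_le_gdist_inr_inr {b b' : Bool} (hb : b ≠ b') :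
    ((2 * q : ℕ) : ℕ∞) ≤ gdist (aug w q) (inr b) (inr b') := by
  let h : V ⊕ Bool → ℕ∞ := Sum.elim (fun _ => q) (fun c => if c = b' then 0 else 2 * q)
  have hedge : ∀ s t, h s ≤ aug w q s t + h t := by
    rintro (u | c) (u' | c')
    · exact le_add_left le_rfl
    · exact le_self_add
    · by_cases c = b' <;> simp_all [h, aug, two_mul]
    · simp [aug]
  simpa [h, hb] using le_gdist_of_potential (aug w q) h (by simp [h]) hedge (inr b)

theorem min_le_gdist_inl_inl (u v : V) :
    min (gdist w u v) ((2 * q : ℕ) : ℕ∞) ≤ gdist (aug w q) (inl u) (inl v) := by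
  let h : V ⊕ Bool → ℕ∞ := Sum.elim (fun a => min (gdist w a v) (2 * q)) (fun _ => q)
  have hedge : ∀ s t, h s ≤ aug w q s t + h t := by
    rintro (a | c) (b | c')
    · calc min (gdist w a v) (2 * q)
          ≤ min (w a b + gdist w b v) (w a b + 2 * q) :=
            min_le_min (gdist_le_add_gdist w a b v) le_add_self
        _ = w a b + min (gdist w b v) (2 * q) := min_add_add_left _ _ _
    · exact (min_le_right _ _).trans (by simp [aug, h, two_mul])
    · simp [h, aug]
    · simp [aug]
  exact le_gdist_of_potential (aug w q) h (by simp [h, gdist_self]) hedge (inl u)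

theorem ecc_le_two_mul [Nonempty V] (s : V ⊕ Bool) : ecc (aug w q) s ≤ ((2 * q : ℕ) : ℕ∞) :=
  iSup_le (gdist_le_two_mul w q s)

theorem ecc_inr [Nonempty V] (b : Bool) : ecc (aug w q) (inr b) = ((2 * q : ℕ) : ℕ∞) :=
  (ecc_le_two_mul w q _).antisymm <|
    (two_mul_le_gdist_inr_inr w q (Bool.not_ne_self b).symm).trans (le_iSup _ (inr !b))

theorem diam_eq [Nonempty V] : diam (aug w q) = ((2 * q : ℕ) : ℕ∞) :=
  (iSup_le (ecc_le_two_mul w q)).antisymm ((ecc_inr w q false).symm.le.trans (le_iSup _ _))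

theorem ecc_inl_le_max (v : V) : ecc (aug w q) (inl v) ≤ max (q : ℕ∞) (ecc w v) := by
  refine iSup_le fun t => ?_
  rcases t with u | b
  · exact (gdist_inl_inl_le w q v u).trans ((le_iSup _ u).trans (le_max_right _ _))
  · exact (gdist_le_edge (aug w q) _ _).trans (le_max_left _ _)

theorem ecc_le_ecc_inl_of_lt {v : V} (hv : ecc (aug w q) (inl v) < ((2 * q : ℕ) : ℕ∞)) :
    ecc w v ≤ ecc (aug w q) (inl v) := by
  refine iSup_le fun u => ?_
  have hu := (min_le_gdist_inl_inl w q v u).trans (le_iSup (gdist (aug w q) (inl v)) (inl u))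
  exact (min_le_iff.mp hu).resolve_right (not_le.mpr hv)

theorem ecc_inl_lt_two_mul_iff (hq : 1 ≤ q) (v : V) :
    ecc (aug w q) (inl v) < ((2 * q : ℕ) : ℕ∞) ↔ ecc w v < ((2 * q : ℕ) : ℕ∞) := by
  have hq2 : (q : ℕ∞) < ((2 * q : ℕ) : ℕ∞) := by exact_mod_cast (by omega : q < 2 * q)
  exact ⟨fun hv => (ecc_le_ecc_inl_of_lt w q hv).trans_lt hv,
    fun hv => (ecc_inl_le_max w q v).trans_lt (max_lt hq2 hv)⟩

end Augmented

theorem stmt3 {V : Type*} [Nonempty V] (w : V → V → ℕ∞) (q : ℕ) (hq : 1 ≤ q) :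
    rad w < ((2 * q : ℕ) : ℕ∞) ↔
      ∃ p : V ⊕ Bool, ecc (aug w q) p ≠ diam (aug w q) := by
  open Augmented in
  calc rad w < ((2 * q : ℕ) : ℕ∞)
      ↔ ∃ v, ecc w v < ((2 * q : ℕ) : ℕ∞) := iInf_lt_iff
    _ ↔ ∃ v, ecc (aug w q) (.inl v) < ((2 * q : ℕ) : ℕ∞) :=
        exists_congr fun v => (ecc_inl_lt_two_mul_iff w q hq v).symm
    _ ↔ ∃ p, ecc (aug w q) p < ((2 * q : ℕ) : ℕ∞) := by simp [Sum.exists, ecc_inr]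
    _ ↔ ∃ p, ecc (aug w q) p ≠ diam (aug w q) := by
        simp only [diam_eq, lt_iff_le_and_ne, ecc_le_two_mul, true_and]
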